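/- Let A be a symmetric positive-semidefinite n×n real matrix, b ∈ ℝⁿ, α ∈ ℝ, f(x) := (1/2)⟨Ax, x⟩ + ⟨b, x⟩ + α, and let g : ℝⁿ → (−∞, +∞] be a proper lower semicontinuous convex function; set φ := f + g. Let γ > 0 be such that B := I − γA is positive-definite, and let x̄ ∈ ℝⁿ satisfy 0 ∈ ∂φ(x̄). Define the single-valued mapping G(x) := γ⁻¹ B ( x − Prox_{γg}( x − γ(Ax + b) ) ), which equals the gradient ∇φ_γ(x) of the forward-backward envelope φ_γ at every x; note G(x̄) = 0. Then the set-valued subgradient mapping ∂φ is metrically regular around (x̄, 0) if and only if the mapping x ↦ {G(x)} is metrically regular around (x̄, 0). -/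

import Mathlib

open Set Topology RealInnerProductSpace

/-- Convexity of an extended-real-valued function `g : ℝⁿ → (−∞,∞]`. -/
def EConvexOn {n : ℕ} (g : EuclideanSpace ℝ (Fin n) → EReal) : Prop :=
  ∀ x y : EuclideanSpace ℝ (Fin n), ∀ t ∈ Set.Icc (0 : ℝ) 1,
    g (t • x + (1 - t) • y) ≤ (t : EReal) * g x + ((1 - t : ℝ) : EReal) * g y

/-- The subdifferential of a convex extended-real-valued function `φ` at `x`
(empty when `φ x = +∞`). -/
def ESubdiff {n : ℕ} (φ : EuclideanSpace ℝ (Fin n) → EReal) (x : EuclideanSpace ℝ (Fin n)) :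
    Set (EuclideanSpace ℝ (Fin n)) :=
  {v | φ x ≠ ⊤ ∧ ∀ y, φ x + ((⟪v, y - x⟫ : ℝ) : EReal) ≤ φ y}

/-- A set-valued mapping `F : ℝⁿ ⇉ ℝⁿ` is metrically regular around `(xbar, ybar)`:
there are `μ > 0` and neighborhoods `U` of `xbar`, `V` of `ybar` with
`dist(x, F⁻¹(y)) ≤ μ · dist(y, F(x))` for all `(x, y) ∈ U × V` (distances taken in
`[0,∞]`, so that the distance to the empty set is `+∞`). -/
def MetricallyRegularAround {n : ℕ}
    (F : EuclideanSpace ℝ (Fin n) → Set (EuclideanSpace ℝ (Fin n)))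
    (xbar ybar : EuclideanSpace ℝ (Fin n)) : Prop :=
  ∃ μ > (0 : ℝ), ∃ U ∈ 𝓝 xbar, ∃ V ∈ 𝓝 ybar,
    ∀ x ∈ U, ∀ y ∈ V,
      EMetric.infEdist x {x' | y ∈ F x'} ≤ ENNReal.ofReal μ * EMetric.infEdist y (F x)

variable {n : ℕ}

local notation "E" => EuclideanSpace ℝ (Fin n)

/-- helper: a ≤ c from a ≤ c + t d for all small t > 0 -/
lemma aux_le_of_forall (a c d : ℝ) (hd : 0 ≤ d) (h : ∀ t:ℝ, 0 < t → t ≤ 1 → a ≤ c + t*d) : a ≤ c := by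
  refine le_of_forall_pos_le_add fun ε hε => ?_
  have ht : (0:ℝ) < min 1 (ε/(d+1)) := lt_min one_pos (div_pos hε (by linarith))
  have := h _ ht (min_le_left _ _)
  have h2 : min 1 (ε/(d+1)) * d ≤ ε := by
    calc min 1 (ε/(d+1)) * d ≤ (ε/(d+1)) * (d+1) := by
          apply mul_le_mul (min_le_right _ _) (by linarith) hd (le_of_lt (div_pos hε (by linarith)))
      _ = ε := by field_simp
  linarith

lemma ereal_fin (x : EReal) (ht : x ≠ ⊤) (hb : x ≠ ⊥) : ∃ r : ℝ, x = (r : EReal) :=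
  ⟨x.toReal, (EReal.coe_toReal ht hb).symm⟩

/-- subgradient of g -/
def Dgsub (g : E → EReal) (v q : E) : Prop :=
  g q ≠ ⊤ ∧ ∀ y, g q + ((⟪v, y - q⟫ : ℝ) : EReal) ≤ g y

def EConvexOn' {n : ℕ} (g : EuclideanSpace ℝ (Fin n) → EReal) : Prop :=
  ∀ x y : EuclideanSpace ℝ (Fin n), ∀ t ∈ Set.Icc (0 : ℝ) 1,
    g (t • x + (1 - t) • y) ≤ (t : EReal) * g x + ((1 - t : ℝ) : EReal) * g y

lemma prox_mem_sub (g : E → EReal) (hgbot : ∀ x, g x ≠ ⊥) (hgtop : ∃ x, g x ≠ ⊤)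
    (hgconv : EConvexOn' g) (γ : ℝ) (hγ : 0 < γ) (P : E → E)
    (hP1 : ∀ u y, g (P u) + ((1/(2*γ)*‖P u - u‖^2 : ℝ):EReal) ≤
      g y + ((1/(2*γ)*‖y - u‖^2 : ℝ):EReal)) :
    ∀ u, Dgsub g (γ⁻¹ • (u - P u)) (P u) := by
  intro u
  set p := P u with hp
  obtain ⟨y₀, hy₀⟩ := hgtop
  have hpt : g p ≠ ⊤ := by
    intro h
    have h1 := hP1 u y₀
    rw [← hp, h, EReal.top_add_coe] at h1
    obtain ⟨s0, hs0⟩ := ereal_fin _ hy₀ (hgbot y₀)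
    rw [hs0, ← EReal.coe_add] at h1
    exact EReal.coe_ne_top _ (top_le_iff.mp h1)
  obtain ⟨r, hr⟩ := ereal_fin _ hpt (hgbot p)
  refine ⟨hpt, fun y => ?_⟩
  by_cases hyT : g y = ⊤
  · simp [hyT]
  obtain ⟨s, hs⟩ := ereal_fin _ hyT (hgbot y)
  rw [hr, hs, ← EReal.coe_add, EReal.coe_le_coe_iff]
  have hd : (0:ℝ) ≤ ‖y - p‖^2/(2*γ) := by positivity
  refine aux_le_of_forall _ _ _ hd fun t ht0 ht1 => ?_
  -- convexity
  have hcv := hgconv y p t ⟨le_of_lt ht0, ht1⟩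
  rw [hr, hs, ← EReal.coe_mul, ← EReal.coe_mul, ← EReal.coe_add] at hcv
  have hmin := hP1 u (t • y + (1-t) • p)
  rw [← hp, hr] at hmin
  have htrans : ((r + 1/(2*γ)*‖p - u‖^2 : ℝ):EReal) ≤
      ((t*s + (1-t)*r + 1/(2*γ)*‖t • y + (1-t) • p - u‖^2 : ℝ):EReal) := by
    rw [EReal.coe_add, EReal.coe_add]
    calc ((r:ℝ):EReal) + ((1/(2*γ)*‖p - u‖^2 : ℝ):EReal) ≤
        g (t • y + (1-t) • p) + ((1/(2*γ)*‖t • y + (1-t) • p - u‖^2 : ℝ):EReal) := hmin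
      _ ≤ ((t*s + (1-t)*r : ℝ):EReal) + ((1/(2*γ)*‖t • y + (1-t) • p - u‖^2 : ℝ):EReal) :=
        add_le_add_left hcv _
  rw [EReal.coe_le_coe_iff] at htrans
  -- norm expansion
  have hyt : t • y + (1-t) • p - u = (p - u) + t • (y - p) := by
    simp only [smul_sub, sub_smul, one_smul]; abel
  rw [hyt, norm_add_sq_real, real_inner_smul_right, norm_smul] at htrans
  simp only [Real.norm_eq_abs, abs_of_pos ht0] at htrans
  have hIn : ⟪γ⁻¹ • (u - p), y - p⟫ = γ⁻¹ * ⟪u - p, y - p⟫ := real_inner_smul_left _ _ _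
  have hIn2 : ⟪u - p, y - p⟫ = - ⟪p - u, y - p⟫ := by
    rw [← inner_neg_left]; congr 1; abel
  rw [hIn, hIn2]
  set c : ℝ := 1/(2*γ) with hc
  have hcpos : 0 < c := by rw [hc]; positivity
  have hγc : γ⁻¹ = 2*c := by rw [hc]; field_simp
  have hdiv : ‖y - p‖^2/(2*γ) = c * ‖y - p‖^2 := by rw [hc]; ring
  rw [hγc, hdiv]
  set I : ℝ := ⟪p - u, y - p⟫ with hI
  set X : ℝ := ‖p - u‖^2 with hX
  set Y : ℝ := ‖y - p‖^2 with hY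
  -- htrans : r + c*X ≤ t*s + (1-t)*r + c*(X + 2*(t*I) + (t*‖y-p‖)^2)
  have hsq : (t*‖y - p‖)^2 = t^2 * Y := by rw [hY]; ring
  rw [hsq] at htrans
  have key : t * (r - (s + 2*c*(-I)*(-1) + t*(c*Y))) ≤ t * 0 := by nlinarith [htrans]
  have := (mul_le_mul_iff_right₀ ht0).mp key
  linarith

lemma sub_prox (g : E → EReal) (hgbot : ∀ x, g x ≠ ⊥) (γ : ℝ) (hγ : 0 < γ) (P : E → E)
    (hP2 : ∀ u q, (∀ y : E, g q + ((1/(2*γ)*‖q - u‖^2 : ℝ):EReal) ≤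
        g y + ((1/(2*γ)*‖y - u‖^2 : ℝ):EReal)) → q = P u)
    (q v : E) (h : Dgsub g v q) : P (q + γ • v) = q := by
  obtain ⟨hqt, hsub⟩ := h
  obtain ⟨r, hr⟩ := ereal_fin _ hqt (hgbot q)
  refine (hP2 (q + γ • v) q fun y => ?_).symm
  by_cases hyT : g y = ⊤
  · rw [hyT, EReal.top_add_coe]; exact le_top
  obtain ⟨s, hs⟩ := ereal_fin _ hyT (hgbot y)
  have hsg := hsub y
  rw [hr, hs, ← EReal.coe_add, EReal.coe_le_coe_iff] at hsg
  rw [hr, hs, ← EReal.coe_add, ← EReal.coe_add, EReal.coe_le_coe_iff]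
  -- hsg : r + ⟪v, y - q⟫ ≤ s
  have h1 : q - (q + γ • v) = -(γ • v) := by abel
  have h2 : y - (q + γ • v) = (y - q) + (-(γ • v)) := by abel
  rw [h1, h2, norm_add_sq_real, norm_neg, inner_neg_right, real_inner_smul_right, norm_smul]
  simp only [Real.norm_eq_abs, abs_of_pos hγ]
  have hnn : (0:ℝ) ≤ 1/(2*γ) * ‖y - q‖^2 := by positivity
  have hIq : ⟪v, y - q⟫ = ⟪y - q, v⟫ := real_inner_comm _ _
  have hcγ : 1 / (2 * γ) * (2 * -(γ * ⟪y - q, v⟫)) = -⟪y - q, v⟫ := by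
    field_simp
  nlinarith [hsg, hnn, hIq, hcγ]

lemma dg_mono (g : E → EReal) (hgbot : ∀ x, g x ≠ ⊥) (v₁ q₁ v₂ q₂ : E)
    (h₁ : Dgsub g v₁ q₁) (h₂ : Dgsub g v₂ q₂) : 0 ≤ ⟪v₁ - v₂, q₁ - q₂⟫ := by
  obtain ⟨r₁, hr₁⟩ := ereal_fin _ h₁.1 (hgbot q₁)
  obtain ⟨r₂, hr₂⟩ := ereal_fin _ h₂.1 (hgbot q₂)
  have e1 := h₁.2 q₂
  have e2 := h₂.2 q₁
  rw [hr₁, hr₂, ← EReal.coe_add, EReal.coe_le_coe_iff] at e1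
  rw [hr₂, hr₁, ← EReal.coe_add, EReal.coe_le_coe_iff] at e2
  have hq : q₂ - q₁ = -(q₁ - q₂) := by abel
  rw [inner_sub_left]
  rw [hq, inner_neg_right] at e1
  linarith

lemma prox_nonexp (g : E → EReal) (hgbot : ∀ x, g x ≠ ⊥) (hgtop : ∃ x, g x ≠ ⊤)
    (hgconv : EConvexOn' g) (γ : ℝ) (hγ : 0 < γ) (P : E → E)
    (hP1 : ∀ u y, g (P u) + ((1/(2*γ)*‖P u - u‖^2 : ℝ):EReal) ≤
      g y + ((1/(2*γ)*‖y - u‖^2 : ℝ):EReal))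
    (u₁ u₂ : E) : ‖P u₁ - P u₂‖ ≤ ‖u₁ - u₂‖ := by
  have h₁ := prox_mem_sub g hgbot hgtop hgconv γ hγ P hP1 u₁
  have h₂ := prox_mem_sub g hgbot hgtop hgconv γ hγ P hP1 u₂
  have hm := dg_mono g hgbot _ _ _ _ h₁ h₂
  rw [← smul_sub, real_inner_smul_left] at hm
  have hsub : u₁ - P u₁ - (u₂ - P u₂) = (u₁ - u₂) - (P u₁ - P u₂) := by abel
  rw [hsub, inner_sub_left] at hm
  have hmm : ‖P u₁ - P u₂‖^2 ≤ ⟪u₁ - u₂, P u₁ - P u₂⟫ := by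
    have hγ' : 0 < γ⁻¹ := inv_pos.mpr hγ
    rw [← real_inner_self_eq_norm_sq]
    nlinarith [hm]
  have hcs := real_inner_le_norm (u₁ - u₂) (P u₁ - P u₂)
  by_cases hz : ‖P u₁ - P u₂‖ = 0
  · rw [hz]; positivity
  · have hpos : 0 < ‖P u₁ - P u₂‖ := lt_of_le_of_ne (norm_nonneg _) (Ne.symm hz)
    nlinarith [hmm, hcs]

def ESubdiff' {n : ℕ} (φ : EuclideanSpace ℝ (Fin n) → EReal) (x : EuclideanSpace ℝ (Fin n)) :
    Set (EuclideanSpace ℝ (Fin n)) :=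
  {v | φ x ≠ ⊤ ∧ ∀ y, φ x + ((⟪v, y - x⟫ : ℝ) : EReal) ≤ φ y}

lemma fexp (A : E →L[ℝ] E) (hsym : ∀ x y : E, ⟪A x, y⟫ = ⟪x, A y⟫) (b : E) (α : ℝ) (x y : E) :
    (1/2*⟪A y, y⟫+⟪b, y⟫+α : ℝ) =
      (1/2*⟪A x, x⟫+⟪b, x⟫+α) + ⟪A x + b, y - x⟫ + 1/2*⟪A (y - x), y - x⟫ := by
  have h1 : ⟪A (y - x), y - x⟫ = ⟪A y, y⟫ - ⟪A y, x⟫ - ⟪A x, y⟫ + ⟪A x, x⟫ := by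
    rw [map_sub, inner_sub_left, inner_sub_right, inner_sub_right]; ring
  have h2 : ⟪A x + b, y - x⟫ = ⟪A x, y⟫ - ⟪A x, x⟫ + (⟪b, y⟫ - ⟪b, x⟫) := by
    rw [inner_add_left, inner_sub_right, inner_sub_right]
  have h3 : ⟪A x, y⟫ = ⟪A y, x⟫ := by rw [hsym, real_inner_comm]
  rw [h1, h2]; linarith

lemma phi_sub_iff (A : E →L[ℝ] E) (hsym : ∀ x y : E, ⟪A x, y⟫ = ⟪x, A y⟫)
    (hpsd : ∀ x : E, 0 ≤ ⟪A x, x⟫) (b : E) (α : ℝ)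
    (g : E → EReal) (hgbot : ∀ x, g x ≠ ⊥) (hgconv : EConvexOn' g) (v x : E) :
    v ∈ ESubdiff' (fun z => ((1/2*⟪A z, z⟫+⟪b, z⟫+α : ℝ):EReal) + g z) x ↔
      Dgsub g (v - (A x + b)) x := by
  constructor
  · rintro ⟨hne, hineq⟩
    have hgx : g x ≠ ⊤ := by
      intro h; apply hne; simp only [h, EReal.coe_add_top]
    obtain ⟨r, hr⟩ := ereal_fin _ hgx (hgbot x)
    refine ⟨hgx, fun y => ?_⟩
    by_cases hyT : g y = ⊤
    · rw [hyT]; exact le_top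
    obtain ⟨s, hs⟩ := ereal_fin _ hyT (hgbot y)
    rw [hr, hs, ← EReal.coe_add, EReal.coe_le_coe_iff]
    have hd : (0:ℝ) ≤ 1/2*⟪A (y - x), y - x⟫ := by
      have := hpsd (y - x); linarith
    refine aux_le_of_forall _ _ _ hd fun t ht0 ht1 => ?_
    have hcv := hgconv y x t ⟨le_of_lt ht0, ht1⟩
    rw [hr, hs, ← EReal.coe_mul, ← EReal.coe_mul, ← EReal.coe_add] at hcv
    set yt := t • y + (1-t) • x with hyt
    have hytx : yt - x = t • (y - x) := by
      rw [hyt]; simp only [smul_sub, sub_smul, one_smul]; abel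
    have hq := hineq yt
    simp only at hq
    rw [hr] at hq
    have hfyt : (1/2*⟪A yt, yt⟫+⟪b, yt⟫+α : ℝ) =
        (1/2*⟪A x, x⟫+⟪b, x⟫+α) + t*⟪A x + b, y - x⟫ + t^2*(1/2*⟪A (y - x), y - x⟫) := by
      rw [fexp A hsym b α x yt, hytx, real_inner_smul_right, map_smul, inner_smul_left,
        inner_smul_right]
      simp only [RCLike.star_def, starRingEnd_apply, star_trivial]
      ring
    rw [hytx, real_inner_smul_right] at hq
    have hchain : ((1/2*⟪A x, x⟫+⟪b, x⟫+α : ℝ):EReal) + (r:EReal) + ((t*⟪v, y - x⟫:ℝ):EReal) ≤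
        ((1/2*⟪A yt, yt⟫+⟪b, yt⟫+α : ℝ):EReal) + ((t*s + (1-t)*r : ℝ):EReal) :=
      le_trans (by exact hq) (add_le_add_right hcv _)
    rw [← EReal.coe_add, ← EReal.coe_add, ← EReal.coe_add, EReal.coe_le_coe_iff, hfyt] at hchain
    rw [inner_sub_left, inner_add_left]
    have key : t * ((r + (⟪v, y - x⟫ - (⟪A x, y - x⟫ + ⟪b, y - x⟫))) -
        (s + t * (1/2*⟪A (y - x), y - x⟫))) ≤ t * 0 := by
      rw [inner_add_left] at hchain
      nlinarith [hchain]
    have := (mul_le_mul_iff_right₀ ht0).mp key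
    linarith
  · rintro ⟨hgx, hsubg⟩
    obtain ⟨r, hr⟩ := ereal_fin _ hgx (hgbot x)
    have hne : ((1/2*⟪A x, x⟫+⟪b, x⟫+α : ℝ):EReal) + g x ≠ ⊤ := by
      rw [hr, ← EReal.coe_add]; exact EReal.coe_ne_top _
    refine ⟨hne, fun y => ?_⟩
    simp only
    by_cases hyT : g y = ⊤
    · rw [hyT, EReal.coe_add_top]; exact le_top
    obtain ⟨s, hs⟩ := ereal_fin _ hyT (hgbot y)
    have hsg := hsubg y
    rw [hr, hs, ← EReal.coe_add, EReal.coe_le_coe_iff] at hsg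
    rw [hr, hs, ← EReal.coe_add, ← EReal.coe_add, ← EReal.coe_add, EReal.coe_le_coe_iff]
    rw [inner_sub_left, inner_add_left] at hsg
    have hfy := fexp A hsym b α x y
    rw [inner_add_left] at hfy
    have hQ := hpsd (y - x)
    linarith

def MRA' {n : ℕ}
    (F : EuclideanSpace ℝ (Fin n) → Set (EuclideanSpace ℝ (Fin n)))
    (xbar ybar : EuclideanSpace ℝ (Fin n)) : Prop :=
  ∃ μ > (0 : ℝ), ∃ U ∈ 𝓝 xbar, ∃ V ∈ 𝓝 ybar,
    ∀ x ∈ U, ∀ y ∈ V,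
      EMetric.infEdist x {x' | y ∈ F x'} ≤ ENNReal.ofReal μ * EMetric.infEdist y (F x)

-- Operator machinery + main theorem
set_option maxHeartbeats 2000000 in
theorem stmt14' {n : ℕ}
    (A : EuclideanSpace ℝ (Fin n) →L[ℝ] EuclideanSpace ℝ (Fin n))
    (hsym : ∀ x y, ⟪A x, y⟫ = ⟪x, A y⟫)
    (hpsd : ∀ x, 0 ≤ ⟪A x, x⟫)
    (b : EuclideanSpace ℝ (Fin n)) (α : ℝ)
    (g : EuclideanSpace ℝ (Fin n) → EReal)
    (hgbot : ∀ x, g x ≠ ⊥) (hgtop : ∃ x, g x ≠ ⊤)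
    (hglsc : LowerSemicontinuous g) (hgconv : EConvexOn' g)
    (γ : ℝ) (hγ : 0 < γ)
    (hB : ∀ x : EuclideanSpace ℝ (Fin n), x ≠ 0 → 0 < ⟪x - γ • A x, x⟫)
    (P : EuclideanSpace ℝ (Fin n) → EuclideanSpace ℝ (Fin n))
    (hP : ∀ u : EuclideanSpace ℝ (Fin n),
      (∀ y : EuclideanSpace ℝ (Fin n),
        g (P u) + ((1 / (2 * γ) * ‖P u - u‖ ^ 2 : ℝ) : EReal) ≤
          g y + ((1 / (2 * γ) * ‖y - u‖ ^ 2 : ℝ) : EReal)) ∧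
      (∀ q : EuclideanSpace ℝ (Fin n),
        (∀ y : EuclideanSpace ℝ (Fin n),
          g q + ((1 / (2 * γ) * ‖q - u‖ ^ 2 : ℝ) : EReal) ≤
            g y + ((1 / (2 * γ) * ‖y - u‖ ^ 2 : ℝ) : EReal)) → q = P u))
    (xbar : EuclideanSpace ℝ (Fin n))
    (hsub : (0 : EuclideanSpace ℝ (Fin n)) ∈
      ESubdiff' (fun x => ((1 / 2 * ⟪A x, x⟫ + ⟪b, x⟫ + α : ℝ) : EReal) + g x) xbar) :
    MRA'
        (fun x => ESubdiff' (fun z => ((1 / 2 * ⟪A z, z⟫ + ⟪b, z⟫ + α : ℝ) : EReal) + g z) x)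
        xbar 0 ↔
    MRA'
        (fun x => {γ⁻¹ • ((x - P (x - γ • (A x + b))) - γ • A (x - P (x - γ • (A x + b))))})
        xbar 0 := by
  classical
  have hP1 : ∀ u y, g (P u) + ((1/(2*γ)*‖P u - u‖^2 : ℝ):EReal) ≤
      g y + ((1/(2*γ)*‖y - u‖^2 : ℝ):EReal) := fun u => (hP u).1
  have hP2 : ∀ u q, (∀ y : EuclideanSpace ℝ (Fin n), g q + ((1/(2*γ)*‖q - u‖^2 : ℝ):EReal) ≤
      g y + ((1/(2*γ)*‖y - u‖^2 : ℝ):EReal)) → q = P u := fun u => (hP u).2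
  have hprox := prox_mem_sub g hgbot hgtop hgconv γ hγ P hP1
  have hproxeq := sub_prox g hgbot γ hγ P hP2
  have hnonexp := prox_nonexp g hgbot hgtop hgconv γ hγ P hP1
  set φ : EuclideanSpace ℝ (Fin n) → EReal := fun z => ((1 / 2 * ⟪A z, z⟫ + ⟪b, z⟫ + α : ℝ) : EReal) + g z with hφ
  have hiff : ∀ (v x : EuclideanSpace ℝ (Fin n)), v ∈ ESubdiff' φ x ↔ Dgsub g (v - (A x + b)) x := fun v x =>
    phi_sub_iff A hsym hpsd b α g hgbot hgconv v x
  -- the operator B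
  set Bop : EuclideanSpace ℝ (Fin n) →L[ℝ] EuclideanSpace ℝ (Fin n) := ContinuousLinearMap.id ℝ (EuclideanSpace ℝ (Fin n)) - γ • A with hBop
  have hBapp : ∀ x : EuclideanSpace ℝ (Fin n), Bop x = x - γ • A x := fun x => by
    rw [hBop]; simp [ContinuousLinearMap.sub_apply]
  have hinj : Function.Injective Bop := by
    intro x y hxy
    by_contra hne
    have h0 : Bop (x - y) = 0 := by rw [map_sub, hxy, sub_self]
    have := hB (x - y) (sub_ne_zero.mpr hne)
    rw [← hBapp, h0] at this
    simp at this
  let Beq : EuclideanSpace ℝ (Fin n) ≃ₗ[ℝ] EuclideanSpace ℝ (Fin n) := LinearEquiv.ofInjectiveEndo (Bop : EuclideanSpace ℝ (Fin n) →ₗ[ℝ] EuclideanSpace ℝ (Fin n)) hinj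
  let BinvL : EuclideanSpace ℝ (Fin n) →L[ℝ] EuclideanSpace ℝ (Fin n) := LinearMap.toContinuousLinearMap (Beq.symm : EuclideanSpace ℝ (Fin n) →ₗ[ℝ] EuclideanSpace ℝ (Fin n))
  have hBinv1 : ∀ v : EuclideanSpace ℝ (Fin n), Bop (BinvL v) = v := fun v => Beq.apply_symm_apply v
  have hBinv2 : ∀ x : EuclideanSpace ℝ (Fin n), BinvL (Bop x) = x := fun x => Beq.symm_apply_apply x
  have hγne : γ ≠ 0 := ne_of_gt hγ
  set T : EuclideanSpace ℝ (Fin n) → EuclideanSpace ℝ (Fin n) :=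
    fun x => x - γ • (A x + b) with hT
  set Gm : EuclideanSpace ℝ (Fin n) → EuclideanSpace ℝ (Fin n) :=
    fun x => γ⁻¹ • Bop (x - P (T x)) with hGm
  have hkey : ∀ x, Bop (x - P (T x)) = γ • Gm x := fun x => by
    rw [hGm]; simp only; rw [smul_inv_smul₀ hγne]
  have graph1 : ∀ x, Dgsub g (Gm x - (A (P (T x)) + b)) (P (T x)) := by
    intro x
    have h := hprox (T x)
    have hveq : γ⁻¹ • (T x - P (T x)) = Gm x - (A (P (T x)) + b) := by
      rw [hGm, hT]
      simp only [hBapp, map_sub, smul_sub, smul_add, inv_smul_smul₀ hγne]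
      abel
    rwa [hveq] at h
  have graph2 : ∀ xh v, Dgsub g (v - (A xh + b)) xh →
      P (T (xh + γ • BinvL v)) = xh ∧ Gm (xh + γ • BinvL v) = v := by
    intro xh v hv
    have h2 : γ • BinvL v - γ • (γ • A (BinvL v)) = γ • v := by
      rw [← smul_sub, ← hBapp, hBinv1]
    have h1 : T (xh + γ • BinvL v) = xh + γ • (v - (A xh + b)) := by
      rw [hT]
      simp only [map_add, map_smul, smul_add, smul_sub]
      rw [← h2]
      abel
    have hPz := hproxeq xh (v - (A xh + b)) hv
    refine ⟨by rw [h1]; exact hPz, ?_⟩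
    rw [hGm]
    show γ⁻¹ • Bop (xh + γ • BinvL v - P (T (xh + γ • BinvL v))) = v
    rw [h1, hPz]
    have h3 : xh + γ • BinvL v - xh = γ • BinvL v := by abel
    rw [h3, map_smul, hBinv1, inv_smul_smul₀ hγne]
  have hfix : P (T xbar) = xbar ∧ Gm xbar = 0 := by
    have h0 : Dgsub g ((0:EuclideanSpace ℝ (Fin n)) - (A xbar + b)) xbar := (hiff 0 xbar).mp hsub
    have h := graph2 xbar 0 h0
    rwa [map_zero, smul_zero, add_zero] at h
  have setid : ∀ y, {x' | Gm x' = y} =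
      (fun xh => xh + γ • BinvL y) '' {x' | y ∈ ESubdiff' φ x'} := by
    intro y
    ext x
    simp only [Set.mem_setOf_eq, Set.mem_image]
    constructor
    · intro hx
      refine ⟨P (T x), (hiff y (P (T x))).mpr ?_, ?_⟩
      · rw [← hx]; exact graph1 x
      · have h3 : Bop (x - P (T x)) = Bop (γ • BinvL y) := by
          rw [hkey, hx, map_smul, hBinv1]
        have h4 := hinj h3
        rw [← h4]; abel
    · rintro ⟨xh, hxh, rfl⟩
      exact (graph2 xh y ((hiff y xh).mp hxh)).2
  -- Lipschitz estimates
  set nB : ℝ := ‖Bop‖ with hnB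
  set κ : ℝ := ‖BinvL‖ with hκ
  have hκ0 : 0 ≤ κ := norm_nonneg _
  have hnB0 : 0 ≤ nB := norm_nonneg _
  have hγinv : (0:ℝ) ≤ γ⁻¹ := le_of_lt (inv_pos.mpr hγ)
  have hTsub : ∀ x x', T x - T x' = Bop (x - x') := by
    intro x x'
    rw [hT, hBapp]
    simp only [map_sub, map_add, smul_add, smul_sub]
    abel
  have hPTlip : ∀ x x', ‖P (T x) - P (T x')‖ ≤ nB * ‖x - x'‖ := by
    intro x x'
    refine le_trans (hnonexp _ _) ?_
    rw [hTsub]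
    exact Bop.le_opNorm _
  set L : ℝ := γ⁻¹*(nB*(1+nB)) with hLdef
  have hL0 : 0 ≤ L := by positivity
  have hGlip : ∀ x x', ‖Gm x - Gm x'‖ ≤ L * ‖x - x'‖ := by
    intro x x'
    have h1 : Gm x - Gm x' = γ⁻¹ • Bop ((x - x') - (P (T x) - P (T x'))) := by
      rw [hGm]
      show γ⁻¹ • Bop (x - P (T x)) - γ⁻¹ • Bop (x' - P (T x')) = _
      rw [← smul_sub, ← map_sub]
      congr 2
      abel
    rw [h1, norm_smul]
    simp only [norm_inv, Real.norm_eq_abs, abs_of_pos hγ]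
    have h4 := Bop.le_opNorm ((x - x') - (P (T x) - P (T x')))
    have h5 := norm_sub_le (x - x') (P (T x) - P (T x'))
    have h3 := hPTlip x x'
    calc γ⁻¹ * ‖Bop ((x - x') - (P (T x) - P (T x')))‖
        ≤ γ⁻¹ * (nB * ((1+nB) * ‖x - x'‖)) := by
          refine mul_le_mul_of_nonneg_left (le_trans h4 (mul_le_mul_of_nonneg_left ?_ hnB0)) hγinv
          calc ‖(x - x') - (P (T x) - P (T x'))‖ ≤ ‖x - x'‖ + ‖P (T x) - P (T x')‖ := h5
            _ ≤ ‖x - x'‖ + nB * ‖x - x'‖ := by linarith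
            _ = (1+nB)*‖x - x'‖ := by ring
      _ = L * ‖x - x'‖ := by rw [hLdef]; ring
  have hxdiff : ∀ x, x - P (T x) = γ • BinvL (Gm x) := by
    intro x
    conv_lhs => rw [← hBinv2 (x - P (T x))]
    rw [hkey, map_smul]
  have hedist : ∀ (a b c d : EuclideanSpace ℝ (Fin n)) (C : ℝ), 0 ≤ C → ‖a - b‖ ≤ C * ‖c - d‖ →
      edist a b ≤ ENNReal.ofReal C * edist c d := by
    intro a b c d C hC h
    rw [edist_dist, edist_dist, dist_eq_norm, dist_eq_norm, ← ENNReal.ofReal_mul hC]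
    exact ENNReal.ofReal_le_ofReal h
  have hBinvbd : ∀ w : EuclideanSpace ℝ (Fin n), ‖γ • BinvL w‖ ≤ (γ*κ+1) * ‖w‖ := by
    intro w
    rw [norm_smul, Real.norm_eq_abs, abs_of_pos hγ]
    have := BinvL.le_opNorm w
    nlinarith [norm_nonneg w, hγ]
  -- replace the explicit formula by Gm
  have hGset : (fun x : EuclideanSpace ℝ (Fin n) =>
      ({γ⁻¹ • ((x - P (x - γ • (A x + b))) - γ • A (x - P (x - γ • (A x + b))))} :
        Set (EuclideanSpace ℝ (Fin n)))) = fun x => {Gm x} := by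
    funext x
    congr 1
  rw [hGset]
  have hset2 : ∀ y : EuclideanSpace ℝ (Fin n),
      {x' : EuclideanSpace ℝ (Fin n) | y ∈ ({Gm x'} : Set (EuclideanSpace ℝ (Fin n)))} =
        {x' | Gm x' = y} := by
    intro y; ext t; simp [eq_comm]
  have hiso : ∀ c : EuclideanSpace ℝ (Fin n),
      Isometry (fun xh : EuclideanSpace ℝ (Fin n) => xh + c) := by
    intro c
    refine Isometry.of_dist_eq fun a b => ?_
    rw [dist_eq_norm, dist_eq_norm]
    congr 1
    abel
  constructor
  · rintro ⟨μ, hμ, U, hU, V, hV, hreg⟩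
    have hγκ : (0:ℝ) ≤ γ*κ := mul_nonneg hγ.le hκ0
    refine ⟨μ + (γ*κ + 1), by linarith, ?_, ?_, V, hV, ?_⟩
    · exact (fun x => P (T x)) ⁻¹' U
    · have hPTcont : Continuous fun x => P (T x) := by
        refine LipschitzWith.continuous (K := Real.toNNReal nB) ?_
        refine LipschitzWith.of_dist_le_mul fun a c => ?_
        rw [dist_eq_norm, dist_eq_norm, Real.coe_toNNReal nB hnB0]
        exact hPTlip a c
      exact hPTcont.continuousAt.preimage_mem_nhds (by rw [hfix.1]; exact hU)
    · intro x hx y hy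
      simp only [Set.mem_preimage] at hx
      rw [hset2 y, setid y]
      have himg : EMetric.infEdist ((x - γ • BinvL y) + γ • BinvL y)
          ((fun xh => xh + γ • BinvL y) '' {x' | y ∈ ESubdiff' φ x'}) =
          EMetric.infEdist (x - γ • BinvL y) {x' | y ∈ ESubdiff' φ x'} :=
        EMetric.infEdist_image (x := x - γ • BinvL y)
        (t := {x' | y ∈ ESubdiff' φ x'}) (hiso (γ • BinvL y))
      have hxc : (x - γ • BinvL y) + γ • BinvL y = x := by abel
      rw [hxc] at himg
      rw [himg]
      have step1 : EMetric.infEdist (x - γ • BinvL y) {x' | y ∈ ESubdiff' φ x'} ≤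
          EMetric.infEdist (P (T x)) {x' | y ∈ ESubdiff' φ x'} +
            edist (x - γ • BinvL y) (P (T x)) :=
        EMetric.infEdist_le_infEdist_add_edist
      have step2 := hreg _ hx y hy
      have step3 : EMetric.infEdist y (ESubdiff' φ (P (T x))) ≤ edist y (Gm x) :=
        EMetric.infEdist_le_edist_of_mem ((hiff _ _).mpr (graph1 x))
      have step4 : edist (x - γ • BinvL y) (P (T x)) ≤
          ENNReal.ofReal (γ*κ+1) * edist y (Gm x) := by
        refine hedist _ _ _ _ _ (by linarith) ?_
        have h5 : (x - γ • BinvL y) - P (T x) = γ • BinvL (Gm x - y) := by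
          rw [map_sub, smul_sub, ← hxdiff x]
          abel
        rw [h5]
        calc ‖γ • BinvL (Gm x - y)‖ ≤ (γ*κ+1) * ‖Gm x - y‖ := hBinvbd _
          _ = (γ*κ+1) * ‖y - Gm x‖ := by rw [norm_sub_rev]
      calc EMetric.infEdist (x - γ • BinvL y) {x' | y ∈ ESubdiff' φ x'}
          ≤ ENNReal.ofReal μ * edist y (Gm x) + ENNReal.ofReal (γ*κ+1) * edist y (Gm x) := by
            refine le_trans step1 (add_le_add (le_trans step2 ?_) step4)
            exact mul_le_mul_right step3 _
        _ = (ENNReal.ofReal μ + ENNReal.ofReal (γ*κ+1)) * edist y (Gm x) := by rw [add_mul]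
        _ = ENNReal.ofReal (μ + (γ*κ+1)) * edist y (Gm x) := by
            rw [ENNReal.ofReal_add hμ.le (by linarith)]
        _ = ENNReal.ofReal (μ + (γ*κ+1)) * EMetric.infEdist y {Gm x} := by
            rw [show ∀ a b : EuclideanSpace ℝ (Fin n), EMetric.infEdist a {b} = edist a b from fun a b => EMetric.infEdist_singleton]
  · rintro ⟨μ, hμ, U, hU, V, hV, hreg⟩
    obtain ⟨ε, hε, hball⟩ := Metric.mem_nhds_iff.mp hU
    set C : ℝ := 1 + L*(γ*κ+1) with hCdef
    have hγκ : (0:ℝ) ≤ γ*κ := mul_nonneg hγ.le hκ0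
    have hC1 : 1 ≤ C := by nlinarith [mul_nonneg hL0 (by linarith : (0:ℝ) ≤ γ*κ+1)]
    have hC0' : (0:ℝ) < C := by linarith
    refine ⟨μ*C, mul_pos hμ hC0', Metric.ball xbar (ε/2),
      Metric.ball_mem_nhds _ (by linarith), V ∩ Metric.ball 0 (ε/(2*(γ*κ+1))),
      Filter.inter_mem hV (Metric.ball_mem_nhds _ (by positivity)), ?_⟩
    intro x hx y hy
    obtain ⟨hyV, hyb⟩ := hy
    have hzU : x + γ • BinvL y ∈ U := by
      apply hball
      rw [Metric.mem_ball, dist_eq_norm]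
      have h6 : (x + γ • BinvL y) - xbar = (x - xbar) + γ • BinvL y := by abel
      have h7 := hBinvbd y
      have h8 : ‖x - xbar‖ < ε/2 := by
        rw [Metric.mem_ball, dist_eq_norm] at hx; exact hx
      have h9 : ‖y‖ < ε/(2*(γ*κ+1)) := by
        rw [Metric.mem_ball, dist_zero_right] at hyb; exact hyb
      have h10 : (γ*κ+1) * ‖y‖ < (γ*κ+1) * (ε/(2*(γ*κ+1))) := by
        apply mul_lt_mul_of_pos_left h9; linarith
      have h11 : (γ*κ+1) * (ε/(2*(γ*κ+1))) = ε/2 := by field_simp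
      calc ‖(x + γ • BinvL y) - xbar‖ ≤ ‖x - xbar‖ + ‖γ • BinvL y‖ := by
            rw [h6]; exact norm_add_le _ _
        _ < ε := by rw [h11] at h10; linarith
    have himg : EMetric.infEdist (x + γ • BinvL y)
        ((fun xh => xh + γ • BinvL y) '' {x' | y ∈ ESubdiff' φ x'}) =
        EMetric.infEdist x {x' | y ∈ ESubdiff' φ x'} :=
      EMetric.infEdist_image (x := x)
      (t := {x' | y ∈ ESubdiff' φ x'}) (hiso (γ • BinvL y))
    rw [← himg, ← setid y]
    have step1 := hreg _ hzU y hyV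
    rw [hset2 y, show ∀ a b : EuclideanSpace ℝ (Fin n), EMetric.infEdist a {b} = edist a b from fun a b => EMetric.infEdist_singleton] at step1
    have hb : ∀ w ∈ ESubdiff' φ x,
        edist y (Gm (x + γ • BinvL y)) ≤ ENNReal.ofReal C * edist y w := by
      intro w hw
      have hw' := (graph2 x w ((hiff w x).mp hw)).2
      refine hedist _ _ _ _ _ (by linarith) ?_
      have htri : ‖y - Gm (x + γ • BinvL y)‖ ≤
          ‖y - w‖ + ‖w - Gm (x + γ • BinvL y)‖ := by
        have h := dist_triangle y w (Gm (x + γ • BinvL y))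
        rw [dist_eq_norm, dist_eq_norm, dist_eq_norm] at h
        exact h
      have hLw : ‖w - Gm (x + γ • BinvL y)‖ ≤ L*(γ*κ+1) * ‖y - w‖ := by
        have h1 := hGlip (x + γ • BinvL w) (x + γ • BinvL y)
        have he : (x + γ • BinvL w) - (x + γ • BinvL y) = γ • BinvL (w - y) := by
          rw [map_sub, smul_sub]; abel
        rw [he, hw'] at h1
        calc ‖w - Gm (x + γ • BinvL y)‖ ≤ L * ‖γ • BinvL (w - y)‖ := h1
          _ ≤ L * ((γ*κ+1) * ‖w - y‖) := mul_le_mul_of_nonneg_left (hBinvbd _) hL0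
          _ = L*(γ*κ+1) * ‖y - w‖ := by rw [norm_sub_rev]; ring
      calc ‖y - Gm (x + γ • BinvL y)‖ ≤ ‖y - w‖ + L*(γ*κ+1) * ‖y - w‖ := by linarith
        _ ≤ C * ‖y - w‖ := by nlinarith [norm_nonneg (y - w)]
    have hCne0 : ENNReal.ofReal C ≠ 0 := ne_of_gt (ENNReal.ofReal_pos.mpr hC0')
    have step2 : edist y (Gm (x + γ • BinvL y)) ≤
        ENNReal.ofReal C * EMetric.infEdist y (ESubdiff' φ x) := by
      show _ ≤ ENNReal.ofReal C * ⨅ w ∈ ESubdiff' φ x, edist y w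
      rw [ENNReal.mul_iInf_of_ne hCne0 ENNReal.ofReal_ne_top]
      refine le_iInf fun w => ?_
      rw [ENNReal.mul_iInf_of_ne hCne0 ENNReal.ofReal_ne_top]
      exact le_iInf fun hw => hb w hw
    calc EMetric.infEdist (x + γ • BinvL y) {x' | Gm x' = y}
        ≤ ENNReal.ofReal μ * (ENNReal.ofReal C * EMetric.infEdist y (ESubdiff' φ x)) :=
          le_trans step1 (mul_le_mul_right step2 _)
      _ = ENNReal.ofReal (μ*C) * EMetric.infEdist y (ESubdiff' φ x) := by
          rw [ENNReal.ofReal_mul hμ.le, mul_assoc]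


/-- metric regularity of `∂φ` versus the FBE gradient mapping.
With `f(x) = ⟪Ax,x⟫/2 + ⟪b,x⟫ + α` (`A` symmetric positive-semidefinite), `g` proper,
lsc, convex, `φ = f + g`, `γ > 0` with `B = I − γA` positive-definite,
`0 ∈ ∂φ(xbar)`, and `P = Prox_{γg}` (the unique-minimizer mapping), define
`G(x) = γ⁻¹ B (x − P(x − γ(Ax + b)))` (which is `∇φ_γ(x)`). Then `∂φ` is
metrically regular around `(xbar, 0)` iff `x ↦ {G x}` is metrically regular
around `(xbar, 0)`. -/
theorem stmt14 {n : ℕ}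
    (A : EuclideanSpace ℝ (Fin n) →L[ℝ] EuclideanSpace ℝ (Fin n))
    (hsym : ∀ x y, ⟪A x, y⟫ = ⟪x, A y⟫)
    (hpsd : ∀ x, 0 ≤ ⟪A x, x⟫)
    (b : EuclideanSpace ℝ (Fin n)) (α : ℝ)
    (g : EuclideanSpace ℝ (Fin n) → EReal)
    (hgbot : ∀ x, g x ≠ ⊥) (hgtop : ∃ x, g x ≠ ⊤)
    (hglsc : LowerSemicontinuous g) (hgconv : EConvexOn g)
    (γ : ℝ) (hγ : 0 < γ)
    (hB : ∀ x : EuclideanSpace ℝ (Fin n), x ≠ 0 → 0 < ⟪x - γ • A x, x⟫)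
    (P : EuclideanSpace ℝ (Fin n) → EuclideanSpace ℝ (Fin n))
    (hP : ∀ u : EuclideanSpace ℝ (Fin n),
      (∀ y : EuclideanSpace ℝ (Fin n),
        g (P u) + ((1 / (2 * γ) * ‖P u - u‖ ^ 2 : ℝ) : EReal) ≤
          g y + ((1 / (2 * γ) * ‖y - u‖ ^ 2 : ℝ) : EReal)) ∧
      (∀ q : EuclideanSpace ℝ (Fin n),
        (∀ y : EuclideanSpace ℝ (Fin n),
          g q + ((1 / (2 * γ) * ‖q - u‖ ^ 2 : ℝ) : EReal) ≤
            g y + ((1 / (2 * γ) * ‖y - u‖ ^ 2 : ℝ) : EReal)) → q = P u))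
    (xbar : EuclideanSpace ℝ (Fin n))
    (hsub : (0 : EuclideanSpace ℝ (Fin n)) ∈
      ESubdiff (fun x => ((1 / 2 * ⟪A x, x⟫ + ⟪b, x⟫ + α : ℝ) : EReal) + g x) xbar) :
    MetricallyRegularAround
        (fun x => ESubdiff (fun z => ((1 / 2 * ⟪A z, z⟫ + ⟪b, z⟫ + α : ℝ) : EReal) + g z) x)
        xbar 0 ↔
    MetricallyRegularAround
        (fun x => {γ⁻¹ • ((x - P (x - γ • (A x + b))) - γ • A (x - P (x - γ • (A x + b))))})
        xbar 0 := by
  exact stmt14' A hsym hpsd b α g hgbot hgtop hglsc hgconv γ hγ hB P hP xbar hsub
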